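/- arXiv:2409.01955 — 5 statements merged into one kernel-verified Lean document; each statement's English description precedes it below -/
import Mathlib

section
/- Let (W, 𝒲, P) be a probability space, let G : W → ℝ^{q×n} and g : W → ℝ^q be measurable maps, and set Z(w) := {ζ ∈ ℝ^n : G(w)·ζ ≤ g(w)} (componentwise inequality). Let ζ_c ∈ ℝ^n satisfy ζ_c ∈ Z(w) for every w ∈ W, let S ⊆ ℝ^n be compact convex with 0 ∈ S, and define the scaling factor σ(w) := sup{σ ≥ 0 : {ζ_c + σ·s : s ∈ S} ⊆ Z(w)}. Fix ε ∈ (0,1) and σ* ≥ 0. If P({w : σ(w) ≥ σ*}) ≥ 1 − ε, then every ζ ∈ {ζ_c + σ*·s : s ∈ S} satisfies P({w : ζ ∈ Z(w)}) ≥ 1 − ε; equivalently, {ζ_c + σ*·s : s ∈ S} ⊆ Z^P := {ζ ∈ ℝ^n : P({w : G(w)·ζ ≤ g(w)}) ≥ 1 − ε}. -/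
open MeasureTheory

/-- Matrices over `ℝ` carry the product measurable structure of the pi type. -/
instance matrixMeasurableSpace {q n : ℕ} : MeasurableSpace (Matrix (Fin q) (Fin n) ℝ) :=
  inferInstanceAs (MeasurableSpace (Fin q → Fin n → ℝ))

/-- Containment mechanism of probabilistic scaling: if the scaling
factor `σ(w) = sup{σ ≥ 0 | ζ_c + σ • S ⊆ Z(w)}` satisfies `σ(w) ≥ σ*` with probability
at least `1 - ε`, then every point of the scaled set `ζ_c + σ* • S` belongs to the
`ε`-chance constraint set `Z^P = {ζ | P(G(w)ζ ≤ g(w)) ≥ 1 - ε}`. -/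
theorem stmt4 {W : Type*} [MeasurableSpace W] (P : Measure W) [IsProbabilityMeasure P]
    {q n : ℕ} (G : W → Matrix (Fin q) (Fin n) ℝ) (g : W → Fin q → ℝ)
    (hG : Measurable G) (hg : Measurable g)
    (Z : W → Set (Fin n → ℝ)) (hZ : ∀ w, Z w = {ζ | (G w).mulVec ζ ≤ g w})
    (ζc : Fin n → ℝ) (hζc : ∀ w, ζc ∈ Z w)
    (S : Set (Fin n → ℝ)) (hScomp : IsCompact S) (hSconv : Convex ℝ S)
    (h0S : (0 : Fin n → ℝ) ∈ S)
    (σ : W → ℝ)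
    (hσ : ∀ w, σ w = sSup {s : ℝ | 0 ≤ s ∧ (fun x => ζc + s • x) '' S ⊆ Z w})
    (ε : ℝ) (hε : ε ∈ Set.Ioo (0 : ℝ) 1) (σstar : ℝ) (hσstar : 0 ≤ σstar)
    (hP : P {w | σstar ≤ σ w} ≥ ENNReal.ofReal (1 - ε)) :
    ∀ ζ ∈ (fun s => ζc + σstar • s) '' S, P {w | ζ ∈ Z w} ≥ ENNReal.ofReal (1 - ε) := by
  intro ζ hζ
  obtain ⟨x, hx, rfl⟩ := hζ
  have key : {w | σstar ≤ σ w} ⊆ {w | ζc + σstar • x ∈ Z w} := by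
    intro w hw
    simp only [Set.mem_setOf_eq] at hw ⊢
    have hZconv : Convex ℝ (Z w) := by
      rw [hZ]
      intro a ha b hb t u ht hu htu
      simp only [Set.mem_setOf_eq] at ha hb ⊢
      intro i
      have h1 : (G w).mulVec (t • a + u • b) i
          = t * (G w).mulVec a i + u * (G w).mulVec b i := by
        rw [Matrix.mulVec_add, Matrix.mulVec_smul, Matrix.mulVec_smul]
        simp [smul_eq_mul]
      rw [h1]
      calc t * (G w).mulVec a i + u * (G w).mulVec b i
          ≤ t * g w i + u * g w i := by
            gcongr
            exacts [ha i, hb i]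
        _ = g w i := by rw [← add_mul, htu, one_mul]
    rcases eq_or_lt_of_le hσstar with h0 | h0
    · rw [← h0]
      simpa using hζc w
    · set T := {s : ℝ | 0 ≤ s ∧ (fun y => ζc + s • y) '' S ⊆ Z w} with hTdef
      have hT0 : (0:ℝ) ∈ T := by
        refine ⟨le_refl 0, ?_⟩
        rintro _ ⟨y, hy, rfl⟩
        simpa using hζc w
      have hσw : σ w = sSup T := hσ w
      have hbdd : BddAbove T := by
        by_contra hb
        rw [Real.sSup_of_not_bddAbove hb] at hσw
        rw [hσw] at hw
        linarith
      have hZclosed : IsClosed (Z w) := by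
        rw [hZ]
        have heq : {ζ : Fin n → ℝ | (G w).mulVec ζ ≤ g w}
            = ⋂ i, {ζ : Fin n → ℝ | (G w).mulVec ζ i ≤ g w i} := by
          ext ζ
          simp [Pi.le_def, Set.mem_iInter]
        rw [heq]
        refine isClosed_iInter fun i => isClosed_le ?_ continuous_const
        exact (((LinearMap.proj i : (Fin q → ℝ) →ₗ[ℝ] ℝ).comp
          (Matrix.mulVecLin (G w))).continuous_of_finiteDimensional)
      have hTclosed : IsClosed T := by
        have heq : T = {s : ℝ | 0 ≤ s} ∩ ⋂ y ∈ S, {s : ℝ | ζc + s • y ∈ Z w} := by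
          ext s
          simp only [hTdef, Set.mem_setOf_eq, Set.mem_inter_iff, Set.mem_iInter,
            Set.image_subset_iff, Set.subset_def, Set.mem_preimage,
            Set.forall_mem_image]
        rw [heq]
        refine IsClosed.inter (isClosed_le continuous_const continuous_id) ?_
        refine isClosed_biInter fun y _ => ?_
        exact hZclosed.preimage (by continuity)
      have hsup : sSup T ∈ T := hTclosed.csSup_mem ⟨0, hT0⟩ hbdd
      obtain ⟨hs0, hsub⟩ := hsup
      have hle : σstar ≤ sSup T := hσw ▸ hw
      have hspos : 0 < sSup T := lt_of_lt_of_le h0 hle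
      set t := σstar / sSup T with htdef
      have ht0 : 0 ≤ t := div_nonneg hσstar hs0
      have ht1 : t ≤ 1 := (div_le_one hspos).mpr hle
      have hts : t * sSup T = σstar := div_mul_cancel₀ σstar hspos.ne'
      have heq : ζc + σstar • x = (1 - t) • ζc + t • (ζc + sSup T • x) := by
        rw [smul_add, smul_smul, hts, ← add_assoc, ← add_smul]
        ring_nf
        rw [one_smul, add_comm]
      rw [heq]
      exact hZconv (hζc w) (hsub ⟨x, hx, rfl⟩) (by linarith) ht0 (by ring)
  exact le_trans hP (measure_mono key)
end

section
/- Let ε ∈ (0,1) and β ∈ (0,1), and let N be a natural number with N ≥ (1+√3)²·ln(1/β)/ε. Set r := ⌈εN/2⌉. Then the binomial lower tail satisfies Σ_{i=0}^{r−1} C(N,i)·ε^i·(1−ε)^{N−i} ≤ β. -/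
/-!
Chernoff-type tilting: since `i ≤ k - 1` on the lower tail, `ε ^ i ≤ 2 ^ (k - 1) (ε / 2) ^ i`,
so the tail is at most `2 ^ (k - 1) (1 - ε / 2) ^ N ≤ exp ((k - 1) log 2 - ε N / 2)`.
For `k = ⌈ε N / 2⌉` this is `exp (-(1 - log 2) ε N / 2)`, and `(1 + √3)² (1 - log 2) ≥ 2`.
-/

open Finset Real

theorem sum_range_choose_mul_pow_le_pow_mul_add_pow {p q c : ℝ} (hp : 0 ≤ p) (hq : 0 ≤ q)
    (hc : 1 ≤ c) (k N : ℕ) :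
    ∑ i ∈ range k, (N.choose i : ℝ) * p ^ i * q ^ (N - i) ≤ c ^ (k - 1) * (p / c + q) ^ N := by
  have hc0 : c ≠ 0 := by positivity
  set g : ℕ → ℝ := fun i ↦ (N.choose i : ℝ) * (p / c) ^ i * q ^ (N - i)
  have hg : ∀ i, 0 ≤ g i := fun i ↦ by positivity
  have hterm : ∀ i ∈ range k, (N.choose i : ℝ) * p ^ i * q ^ (N - i) ≤ c ^ (k - 1) * g i := by
    intro i hi
    have hik : i ≤ k - 1 := Nat.le_sub_one_of_lt (mem_range.mp hi)
    calc (N.choose i : ℝ) * p ^ i * q ^ (N - i) = c ^ i * g i := by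
          simp only [g, div_pow]; field_simp
      _ ≤ c ^ (k - 1) * g i := by gcongr
  have htail : ∑ i ∈ range k, g i ≤ (p / c + q) ^ N := by
    rw [add_pow]
    calc ∑ i ∈ range k, g i = ∑ i ∈ range k ∩ range (N + 1), g i := by
          refine (sum_subset inter_subset_left fun i _ hi ↦ ?_).symm
          have hNi : N < i := by simp_all
          simp [g, Nat.choose_eq_zero_of_lt hNi]
      _ ≤ ∑ i ∈ range (N + 1), g i :=
          sum_le_sum_of_subset_of_nonneg inter_subset_right fun i _ _ ↦ hg i
      _ = _ := sum_congr rfl fun i _ ↦ by ring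
  calc _ ≤ ∑ i ∈ range k, c ^ (k - 1) * g i := sum_le_sum hterm
    _ = c ^ (k - 1) * ∑ i ∈ range k, g i := (mul_sum ..).symm
    _ ≤ _ := by gcongr

theorem binomial_lower_tail_le_two_pow_mul_exp {ε : ℝ} (hε0 : 0 ≤ ε) (hε1 : ε ≤ 1) (k N : ℕ) :
    ∑ i ∈ range k, (N.choose i : ℝ) * ε ^ i * (1 - ε) ^ (N - i)
      ≤ 2 ^ (k - 1) * exp (-(ε * N / 2)) := by
  have hbase : ε / 2 + (1 - ε) ≤ exp (-(ε / 2)) := by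
    linarith [one_sub_le_exp_neg (ε / 2)]
  calc _ ≤ 2 ^ (k - 1) * (ε / 2 + (1 - ε)) ^ N :=
        sum_range_choose_mul_pow_le_pow_mul_add_pow hε0 (by linarith) one_le_two k N
    _ ≤ 2 ^ (k - 1) * exp (-(ε / 2)) ^ N := by gcongr
    _ = 2 ^ (k - 1) * exp (-(ε * N / 2)) := by rw [← exp_nat_mul]; ring_nf

theorem two_pow_ceil_sub_one_le_exp {a : ℝ} (ha : 0 ≤ a) : (2 : ℝ) ^ (⌈a⌉₊ - 1) ≤ exp (log 2 * a) := by
  have hfloor : ((⌈a⌉₊ - 1 : ℕ) : ℝ) ≤ a :=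
    le_trans (by exact_mod_cast (by have := Nat.ceil_le_floor_add_one a; omega)) (Nat.floor_le ha)
  rw [← rpow_def_of_pos two_pos, ← rpow_natCast]
  exact rpow_le_rpow_of_exponent_le one_le_two hfloor

theorem binomial_lower_tail_ceil_half_le {ε : ℝ} (hε0 : 0 ≤ ε) (hε1 : ε ≤ 1) (N : ℕ) :
    ∑ i ∈ range ⌈ε * N / 2⌉₊, (N.choose i : ℝ) * ε ^ i * (1 - ε) ^ (N - i)
      ≤ exp (-((1 - log 2) * (ε * N / 2))) := by
  calc _ ≤ 2 ^ (⌈ε * N / 2⌉₊ - 1) * exp (-(ε * N / 2)) :=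
        binomial_lower_tail_le_two_pow_mul_exp hε0 hε1 _ N
    _ ≤ exp (log 2 * (ε * N / 2)) * exp (-(ε * N / 2)) := by
        gcongr; exact two_pow_ceil_sub_one_le_exp (by positivity)
    _ = _ := by rw [← exp_add]; ring_nf

theorem two_le_one_add_sqrt_three_sq_mul_one_sub_log_two : 2 ≤ (1 + √3) ^ 2 * (1 - log 2) := by
  have hsqrt : (1.732 : ℝ) ≤ √3 := le_sqrt_of_sq_le (by norm_num)
  nlinarith [log_two_lt_d9]

/-- Sample complexity bound of Proposition 1 (eq. (11)): if
`N ≥ (1+√3)² ln(1/β)/ε` and `r = ⌈εN/2⌉`, the binomial lower tail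
`Σ_{i=0}^{r-1} C(N,i) ε^i (1-ε)^{N-i}` is at most `β`. -/
theorem stmt5 (ε β : ℝ) (hε : ε ∈ Set.Ioo (0 : ℝ) 1) (hβ : β ∈ Set.Ioo (0 : ℝ) 1)
    (N : ℕ) (hN : (1 + Real.sqrt 3) ^ 2 * Real.log (1 / β) / ε ≤ (N : ℝ)) :
    ∑ i ∈ Finset.range ⌈ε * (N : ℝ) / 2⌉₊,
      (N.choose i : ℝ) * ε ^ i * (1 - ε) ^ (N - i) ≤ β := by
  obtain ⟨hε0, hε1⟩ := hε
  obtain ⟨hβ0, hβ1⟩ := hβ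
  have hL : 0 ≤ log (1 / β) := log_nonneg (by rw [le_div_iff₀ hβ0]; linarith)
  have hεN : (1 + √3) ^ 2 * log (1 / β) ≤ ε * N := by rwa [div_le_iff₀' hε0] at hN
  calc _ ≤ exp (-((1 - log 2) * (ε * N / 2))) :=
        binomial_lower_tail_ceil_half_le hε0.le hε1.le N
    _ ≤ exp (-log (1 / β)) := by
        gcongr
        nlinarith [two_le_one_add_sqrt_three_sq_mul_one_sub_log_two, log_two_lt_d9]
    _ = β := by rw [one_div, log_inv, neg_neg, exp_log hβ0]
end

section
/- Let ε ∈ (0,1), β ∈ (0,1), and let X₁, …, X_N be independent identically distributed real-valued random variables with common law μ, where N ≥ (1+√3)²·ln(1/β)/ε. Set r := ⌈εN/2⌉ and let X_{(r)} denote the r-th smallest value among X₁, …, X_N. Then the probability of the event {μ({x ∈ ℝ : x < X_{(r)}}) > ε} is at most β. -/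
/-!
Let `t` be an `ε`-quantile of `μ`, i.e. `μ (-∞, t) ≤ ε ≤ μ (-∞, t]`. If `μ` puts mass more than
`ε` strictly below the order statistic `σ`, then `t < σ`, so fewer than `⌈εN/2⌉` samples fall in
`(-∞, t]`, although each of them does so independently with probability at least `ε`. The
Chernoff bound for this binomial lower tail, taken at exponent `-log 2`, is
`exp (-(1 - log 2) ε N / 2)`, and this is at most `β` because `(1 - log 2) (1 + √3)² ≥ 2`.
-/

open MeasureTheory

/-- The `r`-th smallest value among `X 1, …, X N`: the smallest `x` such that at least
`r` of the values are `≤ x`. -/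
noncomputable def orderStat {N : ℕ} (X : Fin N → ℝ) (r : ℕ) : ℝ :=
  sInf {x : ℝ | r ≤ (Finset.univ.filter fun i => X i ≤ x).card}

open ProbabilityTheory Real Set Filter Topology Finset

lemma exists_measureReal_Iio_le_and_le_measureReal_Iic (μ : Measure ℝ) [IsProbabilityMeasure μ]
    {ε : ℝ} (hε0 : 0 < ε) (hε1 : ε < 1) :
    ∃ t, μ.real (Iio t) ≤ ε ∧ ε ≤ μ.real (Iic t) := by
  set F := cdf μ
  set S := {x | ε ≤ F x}
  have hS : S.Nonempty := ((tendsto_cdf_atTop μ).eventually (eventually_gt_nhds hε1)).exists.imp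
    fun _ hx => hx.le
  have hS_bdd : BddBelow S := by
    obtain ⟨a, ha⟩ :=
      eventually_atBot.1 ((tendsto_cdf_atBot μ).eventually (eventually_lt_nhds hε0))
    exact ⟨a, fun x hx => le_of_not_gt fun hxa => (ha x hxa.le).not_ge hx⟩
  refine ⟨sInf S, ?_, ?_⟩
  · have h_leftLim : Function.leftLim F (sInf S) ≤ ε :=
      le_of_tendsto (F.mono.tendsto_leftLim _) (eventually_nhdsWithin_of_forall fun x hx => by
        have hxS : x ∉ S := notMem_of_lt_csInf hx hS_bdd
        exact (not_le.1 hxS).le)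
    have h_Iio := F.measure_Iio (tendsto_cdf_atBot μ) (sInf S)
    rw [measure_cdf, sub_zero] at h_Iio
    rw [measureReal_def, h_Iio]
    exact ENNReal.toReal_le_of_le_ofReal hε0.le (ENNReal.ofReal_le_ofReal h_leftLim)
  · rw [← cdf_eq_real]
    exact ge_of_tendsto ((F.right_continuous _).mono Ioi_subset_Ici_self)
      (eventually_nhdsWithin_of_forall fun x hx => by
        obtain ⟨y, hyS, hyx⟩ := exists_lt_of_csInf_lt hS hx
        exact hyS.trans (F.mono hyx.le))

lemma orderStat_le_of_le_card {N : ℕ} {X : Fin N → ℝ} {r : ℕ} (hr : 0 < r) {t : ℝ}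
    (h : r ≤ #{i | X i ≤ t}) : orderStat X r ≤ t := by
  obtain ⟨b, hb⟩ := (Set.finite_range X).bddBelow
  refine csInf_le ⟨b, fun x hx => ?_⟩ h
  obtain ⟨i, hi⟩ := Finset.card_pos.1 (hr.trans_le hx)
  exact (hb (mem_range_self i)).trans (Finset.mem_filter.1 hi).2

lemma card_lt_of_measure_Iio_lt_measure_lt_orderStat {N : ℕ} {X : Fin N → ℝ} {r : ℕ}
    (hr : 0 < r) {μ : Measure ℝ} {t : ℝ} (h : μ (Iio t) < μ {x | x < orderStat X r}) :
    #{i | X i ≤ t} < r := by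
  by_contra! hle
  exact h.not_ge (measure_mono fun x hx => lt_of_lt_of_le hx (orderStat_le_of_le_card hr hle))

lemma exp_mul_indicator_one {Ω : Type*} (A : Set Ω) (s : ℝ) (ω : Ω) :
    exp (s * A.indicator 1 ω) = 1 + (exp s - 1) * A.indicator 1 ω := by
  by_cases h : ω ∈ A <;> simp [h]

section Chernoff

variable {Ω : Type*} [MeasurableSpace Ω] {P : Measure Ω}

lemma integrable_exp_mul_indicator_one [IsFiniteMeasure P] {A : Set Ω} (hA : MeasurableSet A)
    (s : ℝ) : Integrable (fun ω => exp (s * A.indicator 1 ω)) P := by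
  simp_rw [exp_mul_indicator_one]
  exact (integrable_const 1).add (((integrable_const 1).indicator hA).const_mul _)

lemma mgf_indicator_one [IsProbabilityMeasure P] {A : Set Ω} (hA : MeasurableSet A) (s : ℝ) :
    mgf (A.indicator 1) P s = 1 + (exp s - 1) * P.real A := by
  simp_rw [mgf, exp_mul_indicator_one]
  rw [integral_add (integrable_const 1) (((integrable_const 1).indicator hA).const_mul _),
    integral_const_mul, integral_indicator_one hA]
  simp

open Classical in
theorem measureReal_card_le_half_le [IsProbabilityMeasure P] {ι : Type*} [Fintype ι]
    {A : ι → Set Ω} (hA : ∀ i, MeasurableSet (A i)) (h_indep : iIndepSet A P) {p : ℝ}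
    (hp : ∀ i, p ≤ P.real (A i)) :
    P.real {ω | (#{i | ω ∈ A i} : ℝ) ≤ p * Fintype.card ι / 2} ≤
      exp (-((1 - log 2) * p * Fintype.card ι / 2)) := by
  set n := Fintype.card ι
  set S : Ω → ℝ := ∑ i, (A i).indicator 1
  have hS : ∀ ω, S ω = #{i | ω ∈ A i} := fun ω => by
    simp [S, Finset.sum_apply, Set.indicator_apply]
  have h_indep' : iIndepFun (fun i => (A i).indicator (1 : Ω → ℝ)) P :=
    h_indep.iIndepFun_indicator
  have h_meas : ∀ i, Measurable ((A i).indicator (1 : Ω → ℝ)) :=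
    fun i => measurable_one.indicator (hA i)
  have h_int : Integrable (fun ω => exp (-log 2 * S ω)) P :=
    h_indep'.integrable_exp_mul_sum h_meas fun i _ => integrable_exp_mul_indicator_one (hA i) _
  have h_mgf_i : ∀ i, mgf ((A i).indicator 1) P (-log 2) = 1 - P.real (A i) / 2 := fun i => by
    rw [mgf_indicator_one (hA i), exp_neg, exp_log two_pos]
    ring
  have h_mgf : mgf S P (-log 2) ≤ exp (-(p / 2)) ^ n := by
    rw [h_indep'.mgf_sum h_meas]
    calc ∏ i, mgf ((A i).indicator 1) P (-log 2)
        ≤ ∏ _i : ι, exp (-(p / 2)) := Finset.prod_le_prod (fun i _ => by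
          rw [h_mgf_i]; linarith [measureReal_le_one (μ := P) (s := A i)]) fun i _ => by
          rw [h_mgf_i]; linarith [hp i, add_one_le_exp (-(p / 2))]
      _ = exp (-(p / 2)) ^ n := by rw [Finset.prod_const, Finset.card_univ]
  calc P.real {ω | (#{i | ω ∈ A i} : ℝ) ≤ p * n / 2}
      = P.real {ω | S ω ≤ p * n / 2} := by simp only [hS]
    _ ≤ exp (-(-log 2) * (p * n / 2)) * mgf S P (-log 2) :=
        measure_le_le_exp_mul_mgf _ (neg_nonpos.2 (log_nonneg one_le_two)) h_int
    _ ≤ exp (-(-log 2) * (p * n / 2)) * exp (-(p / 2)) ^ n := by gcongr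
    _ = exp (-((1 - log 2) * p * n / 2)) := by
        rw [← exp_nat_mul, ← exp_add]
        ring_nf

end Chernoff

lemma two_le_one_sub_log_two_mul_one_add_sqrt_three_sq : 2 ≤ (1 - log 2) * (1 + √3) ^ 2 := by
  have h_log : log 2 < 0.6931471808 := log_two_lt_d9
  have h_sqrt : (1.7 : ℝ) ≤ √3 := by
    rw [le_sqrt (by norm_num) (by norm_num)]; norm_num
  nlinarith

lemma exp_neg_one_sub_log_two_mul_le {ε β x : ℝ} (hε : 0 < ε) (hβ0 : 0 < β) (hβ1 : β ≤ 1)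
    (hx : (1 + √3) ^ 2 * log (1 / β) / ε ≤ x) : exp (-((1 - log 2) * ε * x / 2)) ≤ β := by
  have h_log : 0 ≤ log (1 / β) := log_nonneg (one_le_one_div hβ0 hβ1)
  have h_log2 : 0 ≤ 1 - log 2 := by linarith [log_two_lt_d9]
  have hεx : (1 + √3) ^ 2 * log (1 / β) ≤ ε * x := by rwa [div_le_iff₀' hε] at hx
  have h_rate : log (1 / β) ≤ (1 - log 2) * ε * x / 2 := by
    nlinarith [mul_le_mul_of_nonneg_left hεx h_log2,
      two_le_one_sub_log_two_mul_one_add_sqrt_three_sq]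
  simpa [exp_log hβ0] using exp_le_exp.2 (neg_le_neg h_rate)

/-- Order-statistic form of Proposition 1: for `N ≥ (1+√3)² ln(1/β)/ε`
i.i.d. real random variables with common law `μ`, the probability that the law puts
mass more than `ε` strictly below the `⌈εN/2⌉`-th smallest sample is at most `β`. -/
theorem stmt6 {Ω : Type*} [MeasurableSpace Ω] (P : Measure Ω) [IsProbabilityMeasure P]
    (μ : Measure ℝ) [IsProbabilityMeasure μ]
    (ε β : ℝ) (hε : ε ∈ Set.Ioo (0 : ℝ) 1) (hβ : β ∈ Set.Ioo (0 : ℝ) 1)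
    (N : ℕ) (hN : (1 + Real.sqrt 3) ^ 2 * Real.log (1 / β) / ε ≤ (N : ℝ))
    (X : Fin N → Ω → ℝ) (hXmeas : ∀ i, Measurable (X i))
    (hXindep : ProbabilityTheory.iIndepFun X P)
    (hXlaw : ∀ i, P.map (X i) = μ) :
    P {ω | μ {x : ℝ | x < orderStat (fun i => X i ω) ⌈ε * (N : ℝ) / 2⌉₊} >
        ENNReal.ofReal ε} ≤ ENNReal.ofReal β := by
  classical
  obtain ⟨hε0, hε1⟩ := hε
  obtain ⟨hβ0, hβ1⟩ := hβ
  obtain ⟨t, hIio, hIic⟩ := exists_measureReal_Iio_le_and_le_measureReal_Iic μ hε0 hε1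
  set A : Fin N → Set Ω := fun i => X i ⁻¹' Iic t
  have hA : ∀ i, MeasurableSet (A i) := fun i => hXmeas i measurableSet_Iic
  have hPA : ∀ i, ε ≤ P.real (A i) := fun i => by
    rwa [measureReal_def, ← Measure.map_apply (hXmeas i) measurableSet_Iic, hXlaw i]
  have h_indep : iIndepSet A P := (iIndepSet_iff_meas_biInter hA).2 fun s =>
    hXindep.measure_inter_preimage_eq_mul s fun _ _ => measurableSet_Iic
  have hr : 0 < ⌈ε * N / 2⌉₊ := Nat.ceil_pos.2 (by
    have : 0 < (1 + √3) ^ 2 * log (1 / β) := by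
      have := log_pos (one_lt_one_div hβ0 hβ1)
      positivity
    have := (div_le_iff₀' hε0).1 hN
    linarith)
  have hμ_Iio : μ (Iio t) ≤ ENNReal.ofReal ε := by
    rw [← ofReal_measureReal]
    exact ENNReal.ofReal_le_ofReal hIio
  have h_event : {ω | μ {x | x < orderStat (fun i => X i ω) ⌈ε * N / 2⌉₊} > ENNReal.ofReal ε}
      ⊆ {ω | (#{i | ω ∈ A i} : ℝ) ≤ ε * Fintype.card (Fin N) / 2} := by
    intro ω hω
    have hcard := Nat.lt_ceil.1 (card_lt_of_measure_Iio_lt_measure_lt_orderStat hr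
      (hμ_Iio.trans_lt hω))
    simpa [A] using hcard.le
  calc _ ≤ P {ω | (#{i | ω ∈ A i} : ℝ) ≤ ε * Fintype.card (Fin N) / 2} := measure_mono h_event
    _ = ENNReal.ofReal (P.real _) := (ofReal_measureReal (measure_ne_top P _)).symm
    _ ≤ ENNReal.ofReal β := ENNReal.ofReal_le_ofReal
        ((measureReal_card_le_half_le hA h_indep hPA).trans
          (by simpa using exp_neg_one_sub_log_two_mul_le hε0 hβ0 hβ1.le hN))
end

section
/- Fix dimensions n, m, p and a horizon length N ≥ 1, a matrix E ∈ ℝ^{n×p}, and a set D ⊆ ℝ^p. Let 𝔸_k, 𝔸_{k+1} ⊆ ℝ^{n×n} × ℝ^{n×m} with 𝔸_{k+1} ⊆ 𝔸_k, let C_k ⊆ C_{k+1} ⊆ ℝ^n × ℝ^{N·m}, and let S_k ⊆ S_{k+1} ⊆ ℝ^n. For j ∈ {k, k+1} define the first-step constraint set C^R_j := {(ξ, v) ∈ ℝ^n × ℝ^{N·m} : for all (A, B) ∈ 𝔸_j and all d ∈ D, A·ξ + B·v₀ + E·d ∈ S_j}, where v₀ denotes the first m components of v, and the feasible-input set F_j(ξ)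 := {v ∈ ℝ^{N·m} : (ξ, v) ∈ C_j ∩ C^R_j}. Assume S_{k+1} ⊆ {ξ ∈ ℝ^n : F_{k+1}(ξ) ≠ ∅}. Let (A*, B*) ∈ 𝔸_k, d_k ∈ D, and suppose F_k(ξ_k) ≠ ∅; choose any v ∈ F_k(ξ_k) with first block v₀, and set ξ_{k+1} := A*·ξ_k + B*·v₀ + E·d_k. Then F_{k+1}(ξ_{k+1}) ≠ ∅. -/
/-- Theorem 1, Recursive Feasibility. With nested parameter sets
`𝔸_{k+1} ⊆ 𝔸_k`, nested constraint sets `C_k ⊆ C_{k+1}`, nested RCI sets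
`S_k ⊆ S_{k+1}`, the robust first-step constraints `C^R_j`, and `S_{k+1}` contained in
the set of states with nonempty feasible-input set, feasibility at time `k` implies
feasibility at time `k+1` for every consistent parameter pair and disturbance. -/
theorem stmt9 {n m p N : ℕ} (hN : 0 < N)
    (E : Matrix (Fin n) (Fin p) ℝ) (D : Set (Fin p → ℝ))
    (𝔸k 𝔸k1 : Set (Matrix (Fin n) (Fin n) ℝ × Matrix (Fin n) (Fin m) ℝ))
    (h𝔸 : 𝔸k1 ⊆ 𝔸k)
    (Ck Ck1 : Set ((Fin n → ℝ) × (Fin N → Fin m → ℝ))) (hC : Ck ⊆ Ck1)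
    (Sk Sk1 : Set (Fin n → ℝ)) (hS : Sk ⊆ Sk1)
    (CRk CRk1 : Set ((Fin n → ℝ) × (Fin N → Fin m → ℝ)))
    (hCRk : CRk = {pv | ∀ AB ∈ 𝔸k, ∀ d ∈ D,
      AB.1.mulVec pv.1 + AB.2.mulVec (pv.2 ⟨0, hN⟩) + E.mulVec d ∈ Sk})
    (hCRk1 : CRk1 = {pv | ∀ AB ∈ 𝔸k1, ∀ d ∈ D,
      AB.1.mulVec pv.1 + AB.2.mulVec (pv.2 ⟨0, hN⟩) + E.mulVec d ∈ Sk1})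
    (Fk Fk1 : (Fin n → ℝ) → Set (Fin N → Fin m → ℝ))
    (hFk : ∀ ξ, Fk ξ = {v | (ξ, v) ∈ Ck ∩ CRk})
    (hFk1 : ∀ ξ, Fk1 ξ = {v | (ξ, v) ∈ Ck1 ∩ CRk1})
    (hSfeas : Sk1 ⊆ {ξ | Fk1 ξ ≠ ∅})
    (Astar : Matrix (Fin n) (Fin n) ℝ) (Bstar : Matrix (Fin n) (Fin m) ℝ)
    (hstar : (Astar, Bstar) ∈ 𝔸k)
    (dk : Fin p → ℝ) (hdk : dk ∈ D)
    (ξk : Fin n → ℝ) (hfeas : Fk ξk ≠ ∅)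
    (v : Fin N → Fin m → ℝ) (hv : v ∈ Fk ξk) :
    Fk1 (Astar.mulVec ξk + Bstar.mulVec (v ⟨0, hN⟩) + E.mulVec dk) ≠ ∅ := by
  apply hSfeas
  rw [hFk] at hv
  have h := hv.2
  rw [hCRk] at h
  exact hS (h (Astar, Bstar) hstar dk hdk)
end

section
/- Let 𝔸 ⊆ ℝ^{n×n} × ℝ^{n×m} be a set of matrix pairs, E ∈ ℝ^{n×p}, and let D ⊆ ℝ^p be convex with 0 ∈ D. Suppose S ⊆ ℝ^n is robust control invariant, i.e., for every x ∈ S there exists v ∈ ℝ^m such that for all (A, B) ∈ 𝔸 and all d ∈ D: A·x + B·v + E·d ∈ S. Then for every μ ≥ 1 the scaled set μ·S := {μ·x : x ∈ S} is also robust control invariant in the same sense: for every x ∈ μ·S there exists v' ∈ ℝ^m such that for all (A, B) ∈ 𝔸 and all d ∈ D: A·x + B·v' + E·d ∈ μ·S. -/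
open Pointwise

/-- Scaling of robust control invariant sets: if `S` is RCI for the
uncertain dynamics `x⁺ = A x + B v + E d` with parameter set `𝔸` and convex disturbance
set `D ∋ 0`, then for every `μ ≥ 1` the scaled set `μ • S` is also RCI. -/
theorem stmt11 {n m p : ℕ}
    (𝔸 : Set (Matrix (Fin n) (Fin n) ℝ × Matrix (Fin n) (Fin m) ℝ))
    (E : Matrix (Fin n) (Fin p) ℝ)
    (D : Set (Fin p → ℝ)) (hDconv : Convex ℝ D) (h0D : (0 : Fin p → ℝ) ∈ D)
    (S : Set (Fin n → ℝ))
    (hRCI : ∀ x ∈ S, ∃ v : Fin m → ℝ, ∀ AB ∈ 𝔸, ∀ d ∈ D,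
      AB.1.mulVec x + AB.2.mulVec v + E.mulVec d ∈ S)
    (μ : ℝ) (hμ : 1 ≤ μ) :
    ∀ x ∈ μ • S, ∃ v' : Fin m → ℝ, ∀ AB ∈ 𝔸, ∀ d ∈ D,
      AB.1.mulVec x + AB.2.mulVec v' + E.mulVec d ∈ μ • S := by
  have hμ0 : 0 < μ := lt_of_lt_of_le one_pos hμ
  rintro x ⟨y, hy, rfl⟩
  obtain ⟨v, hv⟩ := hRCI y hy
  refine ⟨μ • v, fun AB hAB d hd => ?_⟩
  have hdμ : μ⁻¹ • d ∈ D :=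
    hDconv.smul_mem_of_zero_mem h0D hd
      ⟨inv_nonneg.mpr hμ0.le, inv_le_one_of_one_le₀ hμ⟩
  refine ⟨AB.1.mulVec y + AB.2.mulVec v + E.mulVec (μ⁻¹ • d), hv AB hAB _ hdμ, ?_⟩
  simp only [smul_add, Matrix.mulVec_smul]
  congr 1
  rw [smul_smul, mul_inv_cancel₀ (ne_of_gt hμ0), one_smul]
end
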